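/- arXiv:1504.03878 — 3 statements merged into one kernel-verified Lean document; each statement's English description precedes it below -/
import Mathlib

section
/- Let $n \geq 2$, let $p = (p_1,\ldots,p_n) \in (0,1)^n$ be a probability vector, and let $\lambda \in [0,1]$. Define $p'$ by $p'_i = p_i$ for $i \leq n-2$, $p'_{n-1} = \lambda p_{n-1} + (1-\lambda)p_n$, $p'_n = (1-\lambda)p_{n-1} + \lambda p_n$. Then for every $c \in \{1,\ldots,n\}$ and every $k \geq 0$, $\Pr\{T_{c,n}(p') > k\} \leq \Pr\{T_{c,n}(p) > k\}$, i.e., $T_{c,n}(p') \leq_{st} T_{c,n}(p)$. -/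
open Finset

/-- Number of distinct coupon types in a length-`k` sequence of draws. -/
def distinctCount {n k : ℕ} (f : Fin k → Fin n) : ℕ :=
  (Finset.image f Finset.univ).card

/-- `Pr{T_{c,n}(p) > k}`: probability that fewer than `c` distinct coupons
appear in `k` i.i.d. draws from the distribution `p` on `{1,…,n}`. -/
noncomputable def tailProb (n c k : ℕ) (p : Fin n → ℝ) : ℝ :=
  ∑ f : Fin k → Fin n, if distinctCount f < c then ∏ t, p (f t) else 0

/-!
Merge coupon `n` into coupon `n - 1`: a draw sequence `f` becomes `f₀`, which avoids `n`, and the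
sequences merging to `f₀` are obtained by relabelling any subset `B` of the `m` positions where `f₀`
shows `n - 1`. All of them have the same number `d` of distinct coupons as `f₀` when `B` is empty or
everything, and `d + 1` otherwise. Hence the fiber of `f₀` contributes to `Pr{T > k}` a weight `w`
(from the other coupons) times `(x + y)^m` if `d + 1 < c`, times `x^m + y^m` if `d + 1 = c`, and
zero otherwise, where `x, y` are the masses of the two coupons. Mixing keeps `x + y` and, by
convexity of `t ↦ t^m`, decreases `x^m + y^m`.
-/
lemma pow_mix_add_pow_mix_le {a b lam : ℝ} (ha : 0 ≤ a) (hb : 0 ≤ b)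
    (hlam : lam ∈ Set.Icc (0 : ℝ) 1) (r : ℕ) :
    (lam * a + (1 - lam) * b) ^ r + ((1 - lam) * a + lam * b) ^ r ≤ a ^ r + b ^ r := by
  obtain ⟨h0, h1⟩ := hlam
  have hconv := (convexOn_pow r).2 (Set.mem_Ici.2 ha) (Set.mem_Ici.2 hb)
  have hl := hconv h0 (sub_nonneg.2 h1) (add_sub_cancel lam 1)
  have hr := hconv (sub_nonneg.2 h1) h0 (sub_add_cancel 1 lam)
  simp only [smul_eq_mul] at hl hr
  linarith

lemma sum_powerset_ite_le {ι : Type*} [DecidableEq ι] (T : Finset ι) {x y x' y' : ℝ}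
    (hsum : x' + y' = x + y) (hpow : x' ^ #T + y' ^ #T ≤ x ^ #T + y ^ #T) (d c : ℕ) :
    ∑ B ∈ T.powerset,
        (if (if B = ∅ ∨ B = T then d else d + 1) < c then y' ^ #B * x' ^ (#T - #B) else 0) ≤
      ∑ B ∈ T.powerset,
        (if (if B = ∅ ∨ B = T then d else d + 1) < c then y ^ #B * x ^ (#T - #B) else 0) := by
  rcases T.eq_empty_or_nonempty with rfl | hT
  · simp
  obtain hlt | rfl | hle := lt_trichotomy (d + 1) c
  · have hall : ∀ B ∈ T.powerset, (if B = ∅ ∨ B = T then d else d + 1) < c := by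
      intro B _; split_ifs <;> omega
    rw [sum_congr rfl fun B hB => if_pos (hall B hB), sum_congr rfl fun B hB => if_pos (hall B hB),
      sum_pow_mul_eq_add_pow, sum_pow_mul_eq_add_pow, add_comm y', add_comm y, hsum]
  · have hext : T.powerset.filter (fun B => B = ∅ ∨ B = T) = {∅, T} := by
      ext B
      simp only [mem_filter, mem_powerset, mem_insert, mem_singleton]
      constructor
      · exact And.right
      · rintro (rfl | rfl) <;> simp
    have hcond : ∀ B : Finset ι,
        (if B = ∅ ∨ B = T then d else d + 1) < d + 1 ↔ B = ∅ ∨ B = T := by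
      intro B; split_ifs with h <;> simp [h]
    simp only [hcond]
    rw [← sum_filter, ← sum_filter, hext, sum_pair hT.ne_empty.symm, sum_pair hT.ne_empty.symm]
    simpa [add_comm] using hpow
  · have hnone : ∀ B ∈ T.powerset, ¬ (if B = ∅ ∨ B = T then d else d + 1) < c := by
      intro B _; split_ifs <;> omega
    rw [sum_congr rfl fun B hB => if_neg (hnone B hB),
      sum_congr rfl fun B hB => if_neg (hnone B hB)]

theorem sum_eq_sum_sum_powerset_piecewise {α β M : Type*} [Fintype α] [DecidableEq α] [Fintype β]
    [DecidableEq β] [AddCommMonoid M] {a b : β} (hab : a ≠ b) (φ : (α → β) → M) :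
    ∑ f, φ f = ∑ f₀ ∈ univ.filter (fun f₀ : α → β => ∀ t, f₀ t ≠ b),
      ∑ B ∈ (univ.filter (f₀ · = a)).powerset, φ (B.piecewise (fun _ => b) f₀) := by
  rw [sum_sigma']
  refine sum_bij' (fun f _ => ⟨fun t => if f t = b then a else f t, univ.filter (f · = b)⟩)
    (fun x _ => x.2.piecewise (fun _ => b) x.1) ?_ (fun _ _ => mem_univ _) ?_ ?_ ?_
  · intro f _
    simp only [mem_sigma, mem_filter, mem_univ, true_and, mem_powerset]
    refine ⟨fun t => ?_, fun t ht => ?_⟩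
    · split_ifs with h
      · exact hab
      · exact h
    · simp_all
  · intro f _
    ext t
    by_cases h : f t = b <;> simp [Finset.piecewise, h]
  · rintro ⟨f₀, B⟩ hx
    simp only [mem_sigma, mem_filter, mem_univ, true_and, mem_powerset] at hx
    obtain ⟨hf₀, hB⟩ := hx
    have hpw : ∀ t, B.piecewise (fun _ => b) f₀ t = b ↔ t ∈ B := fun t => by
      by_cases ht : t ∈ B <;> simp [ht, hf₀ t]
    simp only [Sigma.mk.injEq, heq_eq_eq]
    constructor
    · ext t
      by_cases ht : t ∈ B
      · simp [ht, (mem_filter.1 (hB ht)).2]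
      · simp [ht, hf₀ t]
    · ext t; simp [hpw]
  · intro f _
    congr 1
    ext t
    by_cases h : f t = b <;> simp [Finset.piecewise, h]

section Piecewise

variable {n k : ℕ} {a b : Fin n} {f₀ : Fin k → Fin n} {B : Finset (Fin k)}

lemma distinctCount_comp_perm (σ : Equiv.Perm (Fin n)) (f : Fin k → Fin n) :
    distinctCount (σ ∘ f) = distinctCount f := by
  rw [distinctCount, ← image_image, card_image_of_injective _ σ.injective, distinctCount]

lemma distinctCount_piecewise (hb : ∀ t, f₀ t ≠ b) (hB : B ⊆ univ.filter (f₀ · = a)) :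
    distinctCount (B.piecewise (fun _ => b) f₀) =
      if B = ∅ ∨ B = univ.filter (f₀ · = a) then distinctCount f₀ else distinctCount f₀ + 1 := by
  set T := univ.filter (f₀ · = a)
  have hT : ∀ t, t ∈ T ↔ f₀ t = a := by simp [T]
  split_ifs with hext
  · obtain rfl | rfl := hext
    · rw [piecewise_empty]
    · have hswap : T.piecewise (fun _ => b) f₀ = Equiv.swap a b ∘ f₀ := by
        ext t
        by_cases ht : t ∈ T
        · simp [ht, (hT t).1 ht]
        · rw [piecewise_eq_of_notMem _ _ _ ht, Function.comp_apply,
            Equiv.swap_apply_of_ne_of_ne (mt (hT t).2 ht) (hb t)]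
      rw [hswap, distinctCount_comp_perm]
  · rw [not_or] at hext
    obtain ⟨s, hs⟩ := nonempty_iff_ne_empty.2 hext.1
    obtain ⟨r, hrT, hrB⟩ := exists_of_ssubset (hB.ssubset_of_ne hext.2)
    have himage : univ.image (B.piecewise (fun _ => b) f₀) = insert b (univ.image f₀) := by
      ext x
      simp only [mem_image, mem_univ, true_and, mem_insert]
      constructor
      · rintro ⟨t, rfl⟩
        by_cases ht : t ∈ B
        · exact .inl (piecewise_eq_of_mem _ _ _ ht)
        · exact .inr ⟨t, (piecewise_eq_of_notMem _ _ _ ht).symm⟩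
      · rintro (rfl | ⟨t, rfl⟩)
        · exact ⟨s, piecewise_eq_of_mem _ _ _ hs⟩
        by_cases ht : t ∈ B
        -- the value `a` that `B` overwrote is still taken at `r ∈ T \ B`
        · exact ⟨r, by rw [piecewise_eq_of_notMem _ _ _ hrB, (hT r).1 hrT, (hT t).1 (hB ht)]⟩
        · exact ⟨t, piecewise_eq_of_notMem _ _ _ ht⟩
    rw [distinctCount, himage, card_insert_of_notMem (by simpa using hb), distinctCount]

lemma prod_apply_piecewise_const (q : Fin n → ℝ) (hB : B ⊆ univ.filter (f₀ · = a)) :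
    ∏ t, q (B.piecewise (fun _ => b) f₀ t) =
      (∏ t ∈ (univ.filter (f₀ · = a))ᶜ, q (f₀ t)) *
        (q b ^ #B * q a ^ (#(univ.filter (f₀ · = a)) - #B)) := by
  set T := univ.filter (f₀ · = a)
  rw [← prod_compl_mul_prod T, ← card_sdiff_of_subset hB, ← prod_sdiff hB, mul_comm (q b ^ _)]
  congr 1
  · exact prod_congr rfl fun t ht => by
      rw [piecewise_eq_of_notMem _ _ _ fun htB => mem_compl.1 ht (hB htB)]
  · congr 1
    · rw [← prod_const]
      exact prod_congr rfl fun t ht => by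
        rw [piecewise_eq_of_notMem _ _ _ (mem_sdiff.1 ht).2, (mem_filter.1 (mem_sdiff.1 ht).1).2]
    · rw [← prod_const]
      exact prod_congr rfl fun t ht => by rw [piecewise_eq_of_mem _ _ _ ht]

end Piecewise

theorem tailProb_le_of_pow_add_pow_le {n : ℕ} (c k : ℕ) {a b : Fin n} (hab : a ≠ b)
    {q q' : Fin n → ℝ} (hq : ∀ i, 0 ≤ q i) (hoff : ∀ i, i ≠ a → i ≠ b → q' i = q i)
    (hsum : q' a + q' b = q a + q b) (hpow : ∀ r : ℕ, q' a ^ r + q' b ^ r ≤ q a ^ r + q b ^ r) :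
    tailProb n c k q' ≤ tailProb n c k q := by
  unfold tailProb
  rw [sum_eq_sum_sum_powerset_piecewise hab, sum_eq_sum_sum_powerset_piecewise hab]
  refine sum_le_sum fun f₀ hf₀ => ?_
  have hb : ∀ t, f₀ t ≠ b := by simpa using hf₀
  set T := univ.filter (f₀ · = a)
  have hfiber : ∀ r : Fin n → ℝ, ∀ B ∈ T.powerset,
      (if distinctCount (B.piecewise (fun _ => b) f₀) < c
        then ∏ t, r (B.piecewise (fun _ => b) f₀ t) else 0) =
      (∏ t ∈ Tᶜ, r (f₀ t)) *
        if (if B = ∅ ∨ B = T then distinctCount f₀ else distinctCount f₀ + 1) < c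
        then r b ^ #B * r a ^ (#T - #B) else 0 := by
    intro r B hB
    rw [distinctCount_piecewise hb (mem_powerset.1 hB),
      prod_apply_piecewise_const r (mem_powerset.1 hB), mul_ite, mul_zero]
  have hw : ∏ t ∈ Tᶜ, q' (f₀ t) = ∏ t ∈ Tᶜ, q (f₀ t) :=
    prod_congr rfl fun t ht => hoff _ (by simpa [T] using ht) (hb t)
  rw [sum_congr rfl (hfiber q'), sum_congr rfl (hfiber q), ← mul_sum, ← mul_sum, hw]
  exact mul_le_mul_of_nonneg_left (sum_powerset_ite_le T hsum (hpow _) _ c)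
    (prod_nonneg fun t _ => hq _)

/-- Theorem 1 of the paper: averaging the last two entries of `p` by a
`λ`-mixing stochastically decreases the collection time `T_{c,n}`. -/
theorem mixing_decreases_tail (n : ℕ) (hn : 2 ≤ n) (p p' : Fin n → ℝ)
    (hp : ∀ i, p i ∈ Set.Ioo (0:ℝ) 1)
    (lam : ℝ) (hlam : lam ∈ Set.Icc (0:ℝ) 1)
    (h1 : ∀ i : Fin n, (i : ℕ) < n - 2 → p' i = p i)
    (h2 : p' ⟨n - 2, by omega⟩ =
      lam * p ⟨n - 2, by omega⟩ + (1 - lam) * p ⟨n - 1, by omega⟩)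
    (h3 : p' ⟨n - 1, by omega⟩ =
      (1 - lam) * p ⟨n - 2, by omega⟩ + lam * p ⟨n - 1, by omega⟩)
    (c : ℕ) (k : ℕ) :
    tailProb n c k p' ≤ tailProb n c k p := by
  have hab : (⟨n - 2, by omega⟩ : Fin n) ≠ ⟨n - 1, by omega⟩ := by simp [Fin.ext_iff]; omega
  refine tailProb_le_of_pow_add_pow_le c k hab (fun i => (hp i).1.le) (fun i ha hb => h1 i ?_)
    (by rw [h2, h3]; ring) fun r => ?_
  · have := i.isLt
    simp only [ne_eq, Fin.ext_iff] at ha hb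
    omega
  · rw [h2, h3]
    exact pow_mix_add_pow_mix_le (hp _).1.le (hp _).1.le hlam r
end

section
/- For every probability vector $p = (p_1,\ldots,p_n) \in (0,1)^n$ with $\sum_i p_i = 1$, and every $c \in \{1,\ldots,n\}$, the collection time satisfies $T_{c,n}(u) \leq_{st} T_{c,n}(p)$ where $u = (1/n, \ldots, 1/n)$ is the uniform distribution. That is, the uniform distribution stochastically minimizes the time to collect $c$ distinct coupons. -/
open Finset

/-!
A T-transform `p ↦ l • p + (1 - l) • (p ∘ swap i j)` never increases a tail probability, and
finitely many T-transforms, each making one more coordinate equal to `1 / n`, carry any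
probability vector to the uniform one.

For the monotonicity, group the draw sequences by the sequence `g` obtained by recolouring `j`
as `i`. If `g` shows colour `i` at `m ≥ 1` draws and `d` other colours, a sequence in the fiber
of `g` has `d + 1` colours when those `m` draws are all `i` or all `j`, and `d + 2` otherwise.
So the fiber contributes `C * (B * (p i + p j) ^ m + (A - B) * (p i ^ m + p j ^ m))` with
`C ≥ 0` and `A = [d + 1 < c] ≥ B = [d + 2 < c]`. A T-transform keeps `p i + p j` and, by
convexity of `x ↦ x ^ m`, does not increase `p i ^ m + p j ^ m`.
-/

def tTransform {ι : Type*} [DecidableEq ι] (i j : ι) (l : ℝ) (p : ι → ℝ) : ι → ℝ :=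
  fun v => l * p v + (1 - l) * p (Equiv.swap i j v)

section TTransform

variable {ι : Type*} [DecidableEq ι] (i j : ι) (l : ℝ) (p : ι → ℝ)

@[simp]
lemma tTransform_apply_left : tTransform i j l p i = l * p i + (1 - l) * p j := by
  simp [tTransform]

@[simp]
lemma tTransform_apply_right : tTransform i j l p j = l * p j + (1 - l) * p i := by
  simp [tTransform]

lemma tTransform_apply_of_ne_of_ne {v : ι} (hi : v ≠ i) (hj : v ≠ j) :
    tTransform i j l p v = p v := by
  rw [tTransform, Equiv.swap_apply_of_ne_of_ne hi hj]
  ring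

lemma tTransform_nonneg (hl : l ∈ Set.Icc (0 : ℝ) 1) (hp : ∀ v, 0 ≤ p v) (v : ι) :
    0 ≤ tTransform i j l p v :=
  add_nonneg (mul_nonneg hl.1 (hp v)) (mul_nonneg (sub_nonneg.2 hl.2) (hp _))

lemma sum_tTransform [Fintype ι] : ∑ v, tTransform i j l p v = ∑ v, p v := by
  simp only [tTransform, sum_add_distrib, ← mul_sum, Equiv.sum_comp]
  ring

end TTransform

lemma exists_gt_and_exists_lt_of_sum_eq_card_mul {ι : Type*} [Fintype ι] {p : ι → ℝ}
    {a : ℝ} (hsum : ∑ v, p v = Fintype.card ι * a) (hne : ∃ v, p v ≠ a) :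
    (∃ i, a < p i) ∧ ∃ j, p j < a := by
  obtain ⟨v, hv⟩ := hne
  have hconst : ∑ _v : ι, a = Fintype.card ι * a := by simp
  constructor
  · by_contra! h
    have := sum_lt_sum (s := univ) (fun v _ => h v) ⟨v, mem_univ v, (h v).lt_of_ne hv⟩
    linarith
  · by_contra! h
    have := sum_lt_sum (s := univ) (fun v _ => h v) ⟨v, mem_univ v, (h v).lt_of_ne' hv⟩
    linarith

lemma exists_tTransform_apply_left_eq {ι : Type*} [DecidableEq ι] {p : ι → ℝ} {i j : ι}
    {a : ℝ} (hj : p j < a) (hi : a < p i) :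
    ∃ l ∈ Set.Icc (0 : ℝ) 1, tTransform i j l p i = a := by
  have hd : 0 < p i - p j := by linarith
  refine ⟨(a - p j) / (p i - p j), ⟨by positivity, ?_⟩, ?_⟩
  · rw [div_le_one hd]; linarith
  · rw [tTransform_apply_left]
    field_simp
    ring

theorem apply_const_le_of_tTransform_le {ι : Type*} [Fintype ι] [DecidableEq ι]
    (Φ : (ι → ℝ) → ℝ)
    (hΦ : ∀ p, (∀ v, 0 ≤ p v) → ∀ i j, i ≠ j → ∀ l ∈ Set.Icc (0 : ℝ) 1,
      Φ (tTransform i j l p) ≤ Φ p)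
    (p : ι → ℝ) (hp : ∀ v, 0 ≤ p v) (hsum : ∑ v, p v = 1) :
    Φ (fun _ => 1 / Fintype.card ι) ≤ Φ p := by
  set a : ℝ := 1 / Fintype.card ι
  induction hN : #{v | p v ≠ a} using Nat.strong_induction_on generalizing p with
  | _ N ih =>
    by_cases hconst : ∀ v, p v = a
    · rw [show p = fun _ => a from funext hconst]
    push Not at hconst
    have hcard : (Fintype.card ι : ℝ) ≠ 0 := by
      obtain ⟨v, -⟩ := hconst
      exact Nat.cast_ne_zero.2 (Fintype.card_pos_iff.2 ⟨v⟩).ne'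
    obtain ⟨⟨i, hi⟩, ⟨j, hj⟩⟩ := exists_gt_and_exists_lt_of_sum_eq_card_mul (a := a)
      (by rw [hsum, mul_one_div_cancel hcard]) hconst
    obtain ⟨l, hl, hqi⟩ := exists_tTransform_apply_left_eq hj hi
    have hij : i ≠ j := by rintro rfl; linarith
    set q := tTransform i j l p
    have hfewer : #{v | q v ≠ a} < #{v | p v ≠ a} := by
      refine card_lt_card <| (ssubset_iff_of_subset fun v hv => ?_).2
        ⟨i, by simpa using hi.ne', by simpa using hqi⟩
      simp only [mem_filter, mem_univ, true_and] at hv ⊢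
      by_cases hvi : v = i
      · exact absurd (hvi ▸ hqi) hv
      by_cases hvj : v = j
      · exact hvj ▸ hj.ne
      · rwa [← tTransform_apply_of_ne_of_ne i j l p hvi hvj]
    calc Φ (fun _ => a) ≤ Φ q :=
          ih _ (hN ▸ hfewer) q (tTransform_nonneg i j l p hl hp)
            (by rw [sum_tTransform, hsum]) rfl
      _ ≤ Φ p := hΦ p hp i j hij l hl

lemma sum_eq_sum_sum_powerset_piecewise_s4 {σ ι M : Type*} [Fintype σ] [DecidableEq σ]
    [Fintype ι] [DecidableEq ι] [AddCommMonoid M] {i j : ι} (hij : i ≠ j)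
    (F : (σ → ι) → M) :
    ∑ f, F f = ∑ g with ∀ t, g t ≠ j, ∑ h ∈ (univ.filter (g · = i)).powerset,
      F (h.piecewise (fun _ => j) g) := by
  have hsplit : ∀ f : σ → ι,
      (univ.filter (f · = j)).piecewise (fun _ => j) (fun t => if f t = j then i else f t) = f :=
    fun f => funext fun t => by by_cases h : f t = j <;> simp [Finset.piecewise, h]
  rw [sum_sigma']
  refine sum_nbij' (fun f => ⟨fun t => if f t = j then i else f t, univ.filter (f · = j)⟩)
    (fun x => x.2.piecewise (fun _ => j) x.1) (fun f _ => ?_) (fun _ _ => mem_univ _)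
    (fun f _ => hsplit f) (fun x hx => ?_) (fun f _ => congrArg F (hsplit f).symm)
  · simp only [mem_sigma, mem_filter, mem_univ, true_and, mem_powerset]
    refine ⟨fun t => ?_, fun t ht => by simp_all⟩
    split_ifs with h
    exacts [hij, h]
  · obtain ⟨g, h⟩ := x
    simp only [mem_sigma, mem_filter, mem_univ, true_and, mem_powerset] at hx
    have hgh : ∀ t ∈ h, g t = i := fun t ht => by simpa using hx.2 ht
    ext t
    · by_cases ht : t ∈ h <;> simp [Finset.piecewise, ht, hgh, hx.1]
    · refine heq_of_eq (Finset.ext fun t => ?_)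
      by_cases ht : t ∈ h <;> simp [Finset.piecewise, ht, hx.1]

lemma prod_comp_piecewise {σ ι R : Type*} [Fintype σ] [DecidableEq σ] [DecidableEq ι]
    [CommMonoid R] (r : ι → R) {g : σ → ι} {i j : ι} {h : Finset σ}
    (hh : h ⊆ (univ.filter (g · = i))) :
    ∏ t, r (h.piecewise (fun _ => j) g t) =
      (∏ t with g t ≠ i, r (g t)) * (r j ^ #h * r i ^ (#(univ.filter (g · = i)) - #h)) := by
  rw [← prod_filter_not_mul_prod_filter univ (fun t => g t = i)]
  congr 1
  · refine prod_congr rfl fun t ht => ?_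
    rw [piecewise_eq_of_notMem _ _ _ fun hth => (mem_filter.1 ht).2 (by simpa using hh hth)]
  · calc ∏ t with g t = i, r (h.piecewise (fun _ => j) g t)
        _ = ∏ t with g t = i, if t ∈ h then r j else r i :=
          prod_congr rfl fun t ht => by by_cases hth : t ∈ h <;> simp_all [Finset.piecewise]
        _ = _ := by
          rw [prod_ite, filter_mem_eq_inter, inter_eq_right.2 hh, filter_notMem_eq_sdiff,
            prod_const, prod_const, card_sdiff_of_subset hh]

lemma mem_image_piecewise_iff {σ ι : Type*} [Fintype σ] [DecidableEq σ] [DecidableEq ι]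
    {g : σ → ι} {i j v : ι} {h : Finset σ} (hh : h ⊆ univ.filter (g · = i)) :
    v ∈ univ.image (h.piecewise (fun _ => j) g) ↔
      (v = i ∧ h ≠ univ.filter (g · = i)) ∨ (v = j ∧ h ≠ ∅) ∨
        v ∈ (univ.filter (g · ≠ i)).image g := by
  have hgh : ∀ t ∈ h, g t = i := fun t ht => (mem_filter.1 (hh ht)).2
  simp only [mem_image, mem_univ, true_and, mem_filter]
  constructor
  · rintro ⟨t, rfl⟩
    by_cases hth : t ∈ h
    · exact .inr <| .inl ⟨piecewise_eq_of_mem _ _ _ hth, ne_empty_of_mem hth⟩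
    rw [piecewise_eq_of_notMem _ _ _ hth]
    by_cases hti : g t = i
    · exact .inl ⟨hti, fun hP => hth (hP ▸ by simpa using hti)⟩
    · exact .inr <| .inr ⟨t, hti, rfl⟩
  · rintro (⟨rfl, hP⟩ | ⟨rfl, h0⟩ | ⟨t, hti, rfl⟩)
    · obtain ⟨t, htP, hth⟩ := not_subset.1 fun hPh => hP (hh.antisymm hPh)
      exact ⟨t, by rw [piecewise_eq_of_notMem _ _ _ hth]; simpa using htP⟩
    · obtain ⟨t, ht⟩ := nonempty_iff_ne_empty.2 h0
      exact ⟨t, piecewise_eq_of_mem _ _ _ ht⟩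
    · exact ⟨t, piecewise_eq_of_notMem _ _ _ fun hth => hti (hgh t hth)⟩

lemma distinctCount_piecewise_s4 {n k : ℕ} {g : Fin k → Fin n} {i j : Fin n} {h : Finset (Fin k)}
    (hij : i ≠ j) (hg : ∀ t, g t ≠ j) (hP : (univ.filter (g · = i)).Nonempty)
    (hh : h ⊆ univ.filter (g · = i)) :
    distinctCount (h.piecewise (fun _ => j) g) =
      #((univ.filter (g · ≠ i)).image g) +
        if h = ∅ ∨ h = univ.filter (g · = i) then 1 else 2 := by
  set D := (univ.filter (g · ≠ i)).image g with hD
  have hiD : i ∉ D := by simp [D]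
  have hjD : j ∉ D := by simp [D, hg]
  unfold distinctCount
  by_cases h0 : h = ∅
  · have : univ.image (h.piecewise (fun _ => j) g) = insert i D := by
      ext v
      rw [mem_image_piecewise_iff hh, ← hD]
      simp [h0, hP.ne_empty.symm]
    simp [this, hiD, h0]
  by_cases hPh : h = univ.filter (g · = i)
  · have : univ.image (h.piecewise (fun _ => j) g) = insert j D := by
      ext v
      rw [mem_image_piecewise_iff hh, ← hD, ← hPh]
      simp [h0]
    simp [this, hjD, hPh]
  · have : univ.image (h.piecewise (fun _ => j) g) = insert i (insert j D) := by
      ext v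
      rw [mem_image_piecewise_iff hh, ← hD]
      simp [h0, hPh]
    simp [this, hij, hiD, hjD, h0, hPh]

lemma sum_powerset_ite_empty_or_self {α R : Type*} [DecidableEq α] [CommRing R] {s : Finset α}
    (hs : s.Nonempty) (A B x y : R) :
    ∑ h ∈ s.powerset, (if h = ∅ ∨ h = s then A else B) * (x ^ #h * y ^ (#s - #h)) =
      B * (x + y) ^ #s + (A - B) * (x ^ #s + y ^ #s) := by
  have hpair : ({∅, s} : Finset (Finset α)) ⊆ s.powerset := by
    simp [insert_subset_iff]
  calc ∑ h ∈ s.powerset, (if h = ∅ ∨ h = s then A else B) * (x ^ #h * y ^ (#s - #h))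
      = ∑ h ∈ s.powerset, (B * (x ^ #h * y ^ (#s - #h)) +
          if h ∈ ({∅, s} : Finset (Finset α)) then (A - B) * (x ^ #h * y ^ (#s - #h))
          else 0) :=
        sum_congr rfl fun h _ => by split_ifs <;> simp_all; ring
    _ = _ := by
      rw [sum_add_distrib, ← mul_sum, sum_pow_mul_eq_add_pow, sum_ite_mem,
        inter_eq_right.2 hpair, sum_pair hs.ne_empty.symm]
      simp only [card_empty, pow_zero, tsub_zero, one_mul, tsub_self, mul_one, add_right_inj]
      ring

lemma convex_comb_pow_add_pow_le {a b l : ℝ} (ha : 0 ≤ a) (hb : 0 ≤ b)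
    (hl : l ∈ Set.Icc (0 : ℝ) 1) (m : ℕ) :
    (l * a + (1 - l) * b) ^ m + (l * b + (1 - l) * a) ^ m ≤ a ^ m + b ^ m := by
  have hab := (convexOn_pow m).2 ha hb hl.1 (sub_nonneg.2 hl.2) (add_sub_cancel l 1)
  have hba := (convexOn_pow m).2 hb ha hl.1 (sub_nonneg.2 hl.2) (add_sub_cancel l 1)
  simp only [smul_eq_mul] at hab hba
  linarith

section Fiber

variable {n k c : ℕ} {g : Fin k → Fin n} {i j : Fin n}

/-- The part of `tailProb n c k r` due to the draw sequences that become `g` when colour `j` is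
recoloured `i` (see `tailProb_eq_sum_fiberTail`). -/
noncomputable def fiberTail (c : ℕ) (i j : Fin n) (r : Fin n → ℝ) (g : Fin k → Fin n) :
    ℝ :=
  ∑ h ∈ (univ.filter (g · = i)).powerset,
    if distinctCount (h.piecewise (fun _ => j) g) < c then
      ∏ t, r (h.piecewise (fun _ => j) g t) else 0

lemma tailProb_eq_sum_fiberTail (hij : i ≠ j) (r : Fin n → ℝ) :
    tailProb n c k r = ∑ f : Fin k → Fin n with ∀ t, f t ≠ j, fiberTail c i j r f := by
  unfold tailProb fiberTail
  convert sum_eq_sum_sum_powerset_piecewise_s4 hij _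

lemma fiberTail_eq (hij : i ≠ j) (hg : ∀ t, g t ≠ j) (hP : (univ.filter (g · = i)).Nonempty)
    (r : Fin n → ℝ) :
    fiberTail c i j r g =
      (∏ t with g t ≠ i, r (g t)) *
        ((if #((univ.filter (g · ≠ i)).image g) + 2 < c then 1 else 0) *
            (r j + r i) ^ #(univ.filter (g · = i)) +
          ((if #((univ.filter (g · ≠ i)).image g) + 1 < c then 1 else 0) -
            (if #((univ.filter (g · ≠ i)).image g) + 2 < c then 1 else 0)) *
            (r j ^ #(univ.filter (g · = i)) + r i ^ #(univ.filter (g · = i)))) := by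
  rw [fiberTail, ← sum_powerset_ite_empty_or_self hP, mul_sum]
  refine sum_congr rfl fun h hh => ?_
  rw [mem_powerset] at hh
  rw [distinctCount_piecewise_s4 hij hg hP hh, prod_comp_piecewise r hh]
  split_ifs <;> ring

lemma fiberTail_tTransform_le {p : Fin n → ℝ} (hp : ∀ v, 0 ≤ p v) (hij : i ≠ j)
    {l : ℝ} (hl : l ∈ Set.Icc (0 : ℝ) 1) (hg : ∀ t, g t ≠ j) :
    fiberTail c i j (tTransform i j l p) g ≤ fiberTail c i j p g := by
  obtain hP | hP := (univ.filter (g · = i)).eq_empty_or_nonempty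
  · have hgi : ∀ t, g t ≠ i := by simpa [filter_eq_empty_iff] using hP
    simp [fiberTail, tTransform_apply_of_ne_of_ne, hgi, hg]
  rw [fiberTail_eq hij hg hP, fiberTail_eq hij hg hP]
  have hC : ∏ t with g t ≠ i, tTransform i j l p (g t) = ∏ t with g t ≠ i, p (g t) :=
    prod_congr rfl fun t ht => tTransform_apply_of_ne_of_ne _ _ _ _ (mem_filter.1 ht).2 (hg t)
  have hsum : tTransform i j l p j + tTransform i j l p i = p j + p i := by
    simp only [tTransform_apply_left, tTransform_apply_right]; ring
  rw [hC, hsum, tTransform_apply_left, tTransform_apply_right]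
  gcongr ?_ * (_ + ?_ * ?_)
  · exact prod_nonneg fun t _ => hp (g t)
  · split_ifs <;> norm_num
    omega
  · exact convex_comb_pow_add_pow_le (hp j) (hp i) hl _

end Fiber

theorem tailProb_tTransform_le {n c k : ℕ} {p : Fin n → ℝ} (hp : ∀ v, 0 ≤ p v)
    {i j : Fin n} (hij : i ≠ j) {l : ℝ} (hl : l ∈ Set.Icc (0 : ℝ) 1) :
    tailProb n c k (tTransform i j l p) ≤ tailProb n c k p := by
  rw [tailProb_eq_sum_fiberTail hij, tailProb_eq_sum_fiberTail hij]
  exact sum_le_sum fun g hg => fiberTail_tTransform_le hp hij hl (by simpa using hg)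

theorem uniform_minimizes_general (n : ℕ) (p : Fin n → ℝ)
    (hp : ∀ i, p i ∈ Set.Ioo (0:ℝ) 1) (hsum : ∑ i, p i = 1)
    (c : ℕ) (k : ℕ) :
    tailProb n c k (fun _ => 1 / n) ≤ tailProb n c k p := by
  simpa using apply_const_le_of_tTransform_le (tailProb n c k)
    (fun q hq _ _ hij _ hl => tailProb_tTransform_le hq hij hl) p (fun v => (hp v).1.le) hsum

/-- Theorem 2 of the paper: the uniform distribution stochastically minimizes
the time to collect `c` distinct coupons. -/
theorem uniform_minimizes (n : ℕ) (hn : 1 ≤ n) (p : Fin n → ℝ)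
    (hp : ∀ i, p i ∈ Set.Ioo (0:ℝ) 1) (hsum : ∑ i, p i = 1)
    (c : ℕ) (hc : 1 ≤ c) (hcn : c ≤ n) (k : ℕ) :
    tailProb n c k (fun _ => 1 / n) ≤ tailProb n c k p :=
  uniform_minimizes_general n p hp hsum c k
end

section
/- Let $p = (p_1,\ldots,p_n) \in (0,1)^n$ with $\sum_i p_i < 1$, $p_0 = 1 - \sum_i p_i$, and let $v = ((1-p_0)/n, \ldots, (1-p_0)/n)$ and $u = (1/n,\ldots,1/n)$. Then for every $c \in \{1,\ldots,n\}$, $T_{c,n}(u) \leq_{st} T_{c,n}(v) \leq_{st} T_{c,n}(p)$. -/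
open Finset

/-- Full distribution on `{0,1,…,n}` where coupon `0` is the null coupon, drawn
with probability `p₀ = 1 - ∑ pᵢ`. -/
noncomputable def fullDist {n : ℕ} (p : Fin n → ℝ) : Fin (n + 1) → ℝ :=
  Fin.cases (1 - ∑ j, p j) p

/-- `N_j^{(k)}`: number of draws equal to `j` among the `k` draws `f`. -/
def count0 {n k : ℕ} (f : Fin k → Fin (n + 1)) (j : Fin (n + 1)) : ℕ :=
  (Finset.univ.filter (fun t => f t = j)).card

/-- Number of distinct non-null coupon types in a length-`k` draw sequence. -/
def nonnullCount {n k : ℕ} (f : Fin k → Fin (n + 1)) : ℕ :=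
  ((Finset.image f Finset.univ).erase 0).card

/-- `Pr{T_{c,n}(p) > k}` in the generalized (null-coupon) model: probability that
fewer than `c` distinct non-null coupons appear among `k` i.i.d. draws. -/
noncomputable def tailProb0 (n c k : ℕ) (p : Fin n → ℝ) : ℝ :=
  ∑ f : Fin k → Fin (n + 1), if nonnullCount f < c then ∏ t, fullDist p (f t) else 0

/-!
The tail probability is a function of the set of coupons already collected and satisfies a
one-step recursion in which a null draw leaves the state unchanged. Scaling the uniform
distribution by `∑ p` therefore only inserts delays, which can only increase the tail.

For the second inequality, a Robin Hood transfer between two coupons `i, j` (keeping their total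
mass, reducing their imbalance) decreases the tail: given that `m` draws land in `{i, j}`, they
show only one of the two coupons with probability proportional to `x ^ m + y ^ m`, a Schur-convex
function of the pair. Finitely many transfers, each putting one more coordinate at the mean, turn
`p` into the almost uniform distribution.
-/

lemma Fin.image_cons_univ {α : Type*} [DecidableEq α] {k : ℕ} (v : α) (g : Fin k → α) :
    image (Fin.cons v g : Fin (k + 1) → α) univ = insert v (image g univ) := by
  ext w
  simp [Fin.exists_fin_succ, eq_comm]

lemma Fin.sum_univ_pi_succ {α : Type*} [Fintype α] {k : ℕ} (F : (Fin (k + 1) → α) → ℝ) :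
    ∑ f, F f = ∑ v, ∑ g : Fin k → α, F (Fin.cons v g) := by
  rw [← (Fin.consEquiv fun _ => α).sum_comp, Fintype.sum_prod_type]
  rfl

lemma Fintype.exists_lt_of_sum_eq {ι : Type*} [Fintype ι] {f g : ι → ℝ}
    (h : ∑ i, f i = ∑ i, g i) {l : ι} (hl : f l ≠ g l) : ∃ i, g i < f i := by
  by_contra! H
  exact (sum_lt_sum (fun i _ => H i) ⟨l, mem_univ l, lt_of_le_of_ne (H l) hl⟩).ne h

lemma Fintype.sum_eq_add_add_sum_compl_pair {ι : Type*} [Fintype ι] [DecidableEq ι] {i j : ι}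
    (hij : i ≠ j) (F : ι → ℝ) : ∑ l, F l = F i + F j + ∑ l ∈ {i, j}ᶜ, F l := by
  rw [← sum_add_sum_compl {i, j}, sum_pair hij]

lemma Fintype.sum_eq_sum_of_pair {ι : Type*} [Fintype ι] [DecidableEq ι] {i j : ι}
    (hij : i ≠ j) {f g : ι → ℝ} (hpair : f i + f j = g i + g j)
    (hrest : ∀ l ∈ ({i, j}ᶜ : Finset ι), f l = g l) :
    ∑ l, f l = ∑ l, g l := by
  rw [sum_eq_add_add_sum_compl_pair hij, sum_eq_add_add_sum_compl_pair hij g, hpair]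
  exact congrArg _ (Finset.sum_congr rfl hrest)

lemma pow_add_pow_le_of_abs_sub_le {a b x y : ℝ} (ha : 0 ≤ a) (hb : 0 ≤ b)
    (hsum : x + y = a + b) (habs : |x - y| ≤ |a - b|) (m : ℕ) :
    x ^ m + y ^ m ≤ a ^ m + b ^ m := by
  wlog hab : a ≤ b generalizing a b
  · linarith [this hb ha (by linarith) (by rwa [abs_sub_comm b a]) (le_of_not_ge hab)]
  rw [abs_sub_comm a b, abs_of_nonneg (sub_nonneg.2 hab)] at habs
  have hx : x ∈ segment ℝ a b := by
    rw [segment_eq_Icc hab]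
    constructor <;> linarith [abs_le.1 habs]
  obtain ⟨s, t, hs, ht, hst, rfl⟩ := hx
  have hy : y = t • a + s • b := by simp only [smul_eq_mul] at hsum ⊢; nlinarith
  have h1 := (convexOn_pow m).2 ha hb hs ht hst
  have h2 := (convexOn_pow m).2 ha hb ht hs (by linarith)
  simp only [hy, smul_eq_mul] at h1 h2 ⊢
  linear_combination h1 + h2 + (a ^ m + b ^ m) * hst

section Tail

variable {n : ℕ} (c : ℕ) (q : Fin n → ℝ)

/-- Probability that, the coupons in `S` having already been drawn, fewer than `c` distinct
non-null coupons have been seen after `k` further draws. -/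
noncomputable def tailFrom (k : ℕ) (S : Finset (Fin (n + 1))) : ℝ :=
  ∑ f : Fin k → Fin (n + 1),
    if ((S ∪ image f univ).erase 0).card < c then ∏ t, fullDist q (f t) else 0

lemma tailProb0_eq_tailFrom (k : ℕ) : tailProb0 n c k q = tailFrom c q k ∅ := by
  simp only [tailProb0, tailFrom, nonnullCount, empty_union]
  rfl

lemma tailFrom_zero (S : Finset (Fin (n + 1))) :
    tailFrom c q 0 S = if (S.erase 0).card < c then 1 else 0 := by
  simp [tailFrom]

lemma tailFrom_succ (k : ℕ) (S : Finset (Fin (n + 1))) :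
    tailFrom c q (k + 1) S = ∑ v, fullDist q v * tailFrom c q k (insert v S) := by
  rw [tailFrom, Fin.sum_univ_pi_succ]
  refine sum_congr rfl fun v _ => ?_
  rw [tailFrom, mul_sum]
  refine sum_congr rfl fun g _ => ?_
  rw [Fin.image_cons_univ, union_insert, ← insert_union, Fin.prod_univ_succ]
  simp only [Fin.cons_zero, Fin.cons_succ]
  split_ifs <;> ring

lemma tailFrom_insert_zero (k : ℕ) (S : Finset (Fin (n + 1))) :
    tailFrom c q k (insert 0 S) = tailFrom c q k S := by
  simp only [tailFrom, insert_union, erase_insert_eq_erase]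

lemma tailFrom_succ_eq (k : ℕ) (S : Finset (Fin (n + 1))) :
    tailFrom c q (k + 1) S =
      (1 - ∑ l, q l) * tailFrom c q k S + ∑ l, q l * tailFrom c q k (insert l.succ S) := by
  rw [tailFrom_succ, Fin.sum_univ_succ, tailFrom_insert_zero]
  rfl

lemma tailFrom_succ_eq_pair {i j : Fin n} (hij : i ≠ j) (k : ℕ) (S : Finset (Fin (n + 1))) :
    tailFrom c q (k + 1) S = (1 - ∑ l, q l) * tailFrom c q k S
      + (q i * tailFrom c q k (insert i.succ S) + q j * tailFrom c q k (insert j.succ S)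
        + ∑ l ∈ {i, j}ᶜ, q l * tailFrom c q k (insert l.succ S)) := by
  rw [tailFrom_succ_eq,
    Fintype.sum_eq_add_add_sum_compl_pair hij fun l => q l * tailFrom c q k (insert l.succ S)]

/-- The part of `tailFrom c q (k + m + 1) S` in which the first `m + 1` draws all land in
`{i, j}`: they collect `i` only, `j` only, or both. -/
noncomputable def pairTail (i j : Fin n) (m k : ℕ) (S : Finset (Fin (n + 1))) : ℝ :=
  q i ^ (m + 1) * tailFrom c q k (insert i.succ S)
    + q j ^ (m + 1) * tailFrom c q k (insert j.succ S)
    + ((q i + q j) ^ (m + 1) - q i ^ (m + 1) - q j ^ (m + 1))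
      * tailFrom c q k (insert j.succ (insert i.succ S))

lemma pairTail_zero (i j : Fin n) (k : ℕ) (S : Finset (Fin (n + 1))) :
    pairTail c q i j 0 k S
      = q i * tailFrom c q k (insert i.succ S) + q j * tailFrom c q k (insert j.succ S) := by
  simp only [pairTail]
  ring

lemma pairTail_succ {i j : Fin n} (hij : i ≠ j) (m k : ℕ) (S : Finset (Fin (n + 1))) :
    pairTail c q i j m (k + 1) S = (1 - ∑ l, q l) * pairTail c q i j m k S
      + ∑ l ∈ {i, j}ᶜ, q l * pairTail c q i j m k (insert l.succ S)
      + pairTail c q i j (m + 1) k S := by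
  simp only [pairTail, tailFrom_succ_eq_pair c q hij k]
  simp only [Finset.insert_comm, Finset.insert_idem]
  simp only [mul_add, mul_sum, sum_add_distrib, mul_left_comm (q _)]
  ring

variable {q} {q' : Fin n → ℝ} {i j : Fin n}

lemma fullDist_nonneg (hq : 0 ≤ q) (hs : ∑ l, q l ≤ 1) (v : Fin (n + 1)) :
    0 ≤ fullDist q v := by
  cases v using Fin.cases with
  | zero => exact sub_nonneg.2 hs
  | succ l => exact hq l

lemma tailFrom_anti (hq : 0 ≤ q) (hs : ∑ l, q l ≤ 1) (k : ℕ) {S T : Finset (Fin (n + 1))}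
    (hST : S ⊆ T) : tailFrom c q k T ≤ tailFrom c q k S := by
  refine sum_le_sum fun f _ => ?_
  have hcard : ((S ∪ image f univ).erase 0).card ≤ ((T ∪ image f univ).erase 0).card :=
    card_le_card (erase_subset_erase _ (union_subset_union hST subset_rfl))
  split_ifs <;> first | omega | exact le_rfl | exact prod_nonneg fun t _ => fullDist_nonneg hq hs _

lemma tailFrom_le_tailFrom_smul (hq : 0 ≤ q) (hs : ∑ l, q l ≤ 1) {s : ℝ} (hs0 : 0 ≤ s)
    (hs1 : s ≤ 1) (k : ℕ) (S : Finset (Fin (n + 1))) :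
    tailFrom c q k S ≤ tailFrom c (s • q) k S := by
  induction k generalizing S with
  | zero => simp only [tailFrom_zero, le_rfl]
  | succ k ih =>
    set B := tailFrom c q k S
    set A := ∑ l, q l * tailFrom c q k (insert l.succ S)
    have hA : A ≤ (∑ l, q l) * B := by
      rw [sum_mul]
      exact sum_le_sum fun l _ =>
        mul_le_mul_of_nonneg_left (tailFrom_anti c hq hs k (subset_insert _ _)) (hq l)
    have hsq : ∑ l, (s • q) l = s * ∑ l, q l := by simp [mul_sum]
    have hB : B ≤ tailFrom c (s • q) k S := ih S
    have hA' : s * A ≤ ∑ l, (s • q) l * tailFrom c (s • q) k (insert l.succ S) := by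
      rw [mul_sum]
      refine sum_le_sum fun l _ => ?_
      rw [Pi.smul_apply, smul_eq_mul, mul_assoc]
      exact mul_le_mul_of_nonneg_left
        (mul_le_mul_of_nonneg_left (ih _) (hq l)) hs0
    have hsq1 : 0 ≤ 1 - s * ∑ l, q l := by nlinarith
    rw [tailFrom_succ_eq, tailFrom_succ_eq, hsq]
    nlinarith [mul_le_mul_of_nonneg_left hB hsq1]

lemma tailProb_eq_tailProb0 (hq : ∑ l, q l = 1) (k : ℕ) :
    tailProb n c k q = tailProb0 n c k q := by
  refine Fintype.sum_of_injective (fun g => Fin.succ ∘ g)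
    (fun g g' h => funext fun t => Fin.succ_injective n (congrFun h t)) _ _ ?_ fun g => ?_
  · intro f hf
    obtain ⟨t, ht⟩ : ∃ t, f t = 0 := by
      by_contra! H
      exact hf ⟨fun t => (f t).pred (H t), funext fun t => Fin.succ_pred _ _⟩
    have h0 : fullDist q 0 = 0 := by simp [fullDist, hq]
    have hprod : ∏ t, fullDist q (f t) = 0 := prod_eq_zero (mem_univ t) (by rw [ht, h0])
    simp [hprod]
  · have hcount : nonnullCount (Fin.succ ∘ g) = distinctCount g := by
      rw [nonnullCount, distinctCount, ← image_image,
        erase_eq_of_notMem (by simp [Fin.succ_ne_zero]),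
        card_image_of_injective _ (Fin.succ_injective n)]
    simp only [hcount, Function.comp_apply]
    rfl

lemma card_erase_zero_insert {S : Finset (Fin (n + 1))} {v : Fin (n + 1)} (hv0 : v ≠ 0)
    (hv : v ∉ S) : ((insert v S).erase 0).card = (S.erase 0).card + 1 := by
  rw [erase_insert_of_ne hv0, card_insert_of_notMem fun h => hv (mem_of_mem_erase h)]

lemma pairTail_zero_le (hq : 0 ≤ q) (hpair : q' i + q' j = q i + q j)
    (hbal : |q' i - q' j| ≤ |q i - q j|) (hij : i ≠ j) {S : Finset (Fin (n + 1))}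
    (hiS : i.succ ∉ S) (hjS : j.succ ∉ S) (m : ℕ) :
    pairTail c q' i j m 0 S ≤ pairTail c q i j m 0 S := by
  have hjiS : j.succ ∉ insert i.succ S := by
    simp [hjS, (Fin.succ_injective n).ne hij.symm]
  have hpow := pow_add_pow_le_of_abs_sub_le (hq i) (hq j) hpair hbal (m + 1)
  simp only [pairTail, tailFrom_zero, hpair, card_erase_zero_insert (Fin.succ_ne_zero _) hiS,
    card_erase_zero_insert (Fin.succ_ne_zero _) hjS,
    card_erase_zero_insert (Fin.succ_ne_zero _) hjiS]
  split_ifs <;> nlinarith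

lemma tailFrom_le_of_robinHood (hq : 0 ≤ q) (hs : ∑ l, q l ≤ 1) (hij : i ≠ j)
    (hpair : q' i + q' j = q i + q j) (hbal : |q' i - q' j| ≤ |q i - q j|)
    (hrest : ∀ l ∈ ({i, j}ᶜ : Finset (Fin n)), q' l = q l) (k : ℕ)
    (S : Finset (Fin (n + 1))) (hiS : i.succ ∉ S) (hjS : j.succ ∉ S) :
    tailFrom c q' k S ≤ tailFrom c q k S ∧
      ∀ m, pairTail c q' i j m k S ≤ pairTail c q i j m k S := by
  have hsum : ∑ l, q' l = ∑ l, q l := Fintype.sum_eq_sum_of_pair hij hpair hrest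
  have hs0 : 0 ≤ 1 - ∑ l, q l := sub_nonneg.2 hs
  induction k generalizing S with
  | zero =>
    exact ⟨by simp only [tailFrom_zero, le_rfl], pairTail_zero_le c hq hpair hbal hij hiS hjS⟩
  | succ k ih =>
    have hfresh : ∀ l ∈ ({i, j}ᶜ : Finset (Fin n)),
        i.succ ∉ insert l.succ S ∧ j.succ ∉ insert l.succ S := by
      intro l hl
      simp only [mem_compl, mem_insert, mem_singleton, not_or] at hl
      simp [hiS, hjS, Fin.succ_inj, Ne.symm hl.1, Ne.symm hl.2]
    have hrestSum : ∀ F' F : Finset (Fin (n + 1)) → ℝ,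
        (∀ l ∈ ({i, j}ᶜ : Finset (Fin n)), F' (insert l.succ S) ≤ F (insert l.succ S)) →
        ∑ l ∈ {i, j}ᶜ, q' l * F' (insert l.succ S)
          ≤ ∑ l ∈ {i, j}ᶜ, q l * F (insert l.succ S) :=
      fun F' F hF => sum_le_sum fun l hl => by
        rw [hrest l hl]
        exact mul_le_mul_of_nonneg_left (hF l hl) (hq l)
    obtain ⟨ihS, ihSm⟩ := ih S hiS hjS
    refine ⟨?_, fun m => ?_⟩
    · rw [tailFrom_succ_eq_pair c q' hij, tailFrom_succ_eq_pair c q hij, ← pairTail_zero,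
        ← pairTail_zero, hsum]
      exact add_le_add (mul_le_mul_of_nonneg_left ihS hs0) (add_le_add (ihSm 0)
        (hrestSum _ _ fun l hl => (ih _ (hfresh l hl).1 (hfresh l hl).2).1))
    · rw [pairTail_succ c q' hij, pairTail_succ c q hij, hsum]
      exact add_le_add (add_le_add (mul_le_mul_of_nonneg_left (ihSm m) hs0)
        (hrestSum _ _ fun l hl => (ih _ (hfresh l hl).1 (hfresh l hl).2).2 m)) (ihSm (m + 1))

end Tail

lemma exists_robinHood_toward_const {n : ℕ} {μ : ℝ} {q : Fin n → ℝ} (hq : 0 ≤ q)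
    (hμ : ∑ l, q l = ∑ _l : Fin n, μ) {l : Fin n} (hl : q l ≠ μ) :
    ∃ (q' : Fin n → ℝ) (i j : Fin n), i ≠ j ∧ 0 ≤ q' ∧ q' i + q' j = q i + q j ∧
      |q' i - q' j| ≤ |q i - q j| ∧ (∀ l ∈ ({i, j}ᶜ : Finset (Fin n)), q' l = q l) ∧
      #{l | q' l ≠ μ} < #{l | q l ≠ μ} := by
  obtain ⟨i, hi⟩ := Fintype.exists_lt_of_sum_eq hμ hl
  obtain ⟨j, hj⟩ := Fintype.exists_lt_of_sum_eq hμ.symm hl.symm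
  have hij : i ≠ j := by rintro rfl; linarith
  set q' := Function.update (Function.update q i μ) j (q i + q j - μ)
  have hq'i : q' i = μ := by simp [q', hij]
  have hq'j : q' j = q i + q j - μ := by simp [q']
  have hrest : ∀ l ∈ ({i, j}ᶜ : Finset (Fin n)), q' l = q l := by
    intro l hl
    simp only [mem_compl, mem_insert, mem_singleton, not_or] at hl
    simp [q', hl.1, hl.2]
  refine ⟨q', i, j, hij, fun l => ?_, by rw [hq'i, hq'j]; ring, ?_, hrest,
    card_lt_card ⟨fun l => ?_, fun h => ?_⟩⟩
  · have hql : 0 ≤ q l := hq l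
    have hqj : 0 ≤ q j := hq j
    show 0 ≤ q' l
    simp only [q', Function.update_apply]
    split_ifs <;> linarith
  · rw [hq'i, hq'j, abs_of_pos (by linarith : 0 < q i - q j), abs_le]
    constructor <;> linarith
  · simp only [mem_filter, mem_univ, true_and]
    intro hl
    by_cases hlj : l = j
    · exact hlj ▸ hj.ne
    have hli : l ≠ i := by rintro rfl; exact hl hq'i
    rwa [← hrest l (by simp [hli, hlj])]
  · exact (by simpa using h (by simpa using hi.ne') : q' i ≠ μ) hq'i

lemma tailProb0_const_le {n : ℕ} (c k : ℕ) {μ : ℝ} {q : Fin n → ℝ} (hq : 0 ≤ q)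
    (hs : ∑ l, q l ≤ 1) (hμ : ∑ l, q l = n * μ) :
    tailProb0 n c k (fun _ => μ) ≤ tailProb0 n c k q := by
  induction hN : #{l | q l ≠ μ} using Nat.strong_induction_on generalizing q with
  | _ N ih =>
  by_cases hconst : ∀ l, q l = μ
  · rw [show q = fun _ => μ from funext hconst]
  push Not at hconst
  obtain ⟨l, hl⟩ := hconst
  obtain ⟨q', i, j, hij, hq', hpair, hbal, hrest, hcard⟩ :=
    exists_robinHood_toward_const hq (by simp [hμ]) hl
  have hsum : ∑ l, q' l = ∑ l, q l := Fintype.sum_eq_sum_of_pair hij hpair hrest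
  calc tailProb0 n c k (fun _ => μ) ≤ tailProb0 n c k q' :=
        ih _ (hN ▸ hcard) hq' (hsum ▸ hs) (hsum ▸ hμ) rfl
    _ ≤ tailProb0 n c k q := by
        simp only [tailProb0_eq_tailFrom]
        exact (tailFrom_le_of_robinHood c hq hs hij hpair hbal hrest k ∅ (notMem_empty _)
          (notMem_empty _)).1

theorem almost_uniform_minimizes_general (n : ℕ) (hn : 1 ≤ n) (p : Fin n → ℝ)
    (hp : ∀ i, p i ∈ Set.Ioo (0:ℝ) 1) (hsum : ∑ i, p i < 1)
    (c : ℕ) (k : ℕ) :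
    tailProb n c k (fun _ => 1 / n) ≤ tailProb0 n c k (fun _ => (∑ i, p i) / n) ∧
      tailProb0 n c k (fun _ => (∑ i, p i) / n) ≤ tailProb0 n c k p := by
  have hn0 : (n : ℝ) ≠ 0 := by positivity
  have hp0 : 0 ≤ p := fun i => (hp i).1.le
  have hs0 : 0 ≤ ∑ i, p i := sum_nonneg fun i _ => hp0 i
  have hu : ∑ _i : Fin n, (1 / n : ℝ) = 1 := by simp [hn0]
  have hv : (fun _ => (∑ i, p i) / n) = (∑ i, p i) • fun _ : Fin n => (1 / n : ℝ) := by
    ext; simp [div_eq_mul_inv]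
  constructor
  · rw [tailProb_eq_tailProb0 c hu, hv, tailProb0_eq_tailFrom, tailProb0_eq_tailFrom]
    exact tailFrom_le_tailFrom_smul c (fun _ => by positivity) hu.le hs0 hsum.le k ∅
  · exact tailProb0_const_le c k hp0 hsum.le (by field_simp)

/-- Theorem 3 of the paper: with `p_0 = 1 - ∑ pᵢ > 0`,
`T_{c,n}(u) ≤_st T_{c,n}(v) ≤_st T_{c,n}(p)`, where `u` is uniform and
`v_i = (1-p_0)/n` is the almost uniform distribution. -/
theorem almost_uniform_minimizes (n : ℕ) (hn : 1 ≤ n) (p : Fin n → ℝ)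
    (hp : ∀ i, p i ∈ Set.Ioo (0:ℝ) 1) (hsum : ∑ i, p i < 1)
    (c : ℕ) (hc : 1 ≤ c) (hcn : c ≤ n) (k : ℕ) :
    tailProb n c k (fun _ => 1 / n) ≤ tailProb0 n c k (fun _ => (∑ i, p i) / n) ∧
      tailProb0 n c k (fun _ => (∑ i, p i) / n) ≤ tailProb0 n c k p :=
  almost_uniform_minimizes_general n hn p hp hsum c k
end
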